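/- Finite-horizon L₂-gain bound (part of Lemma 1): let X ⊆ ℝⁿ, let V : ℝⁿ → ℝ be continuously differentiable, nonnegative on X, and satisfy the HJI equation at every point of X. Let f, g, k, h be continuous, let T > 0, let w : ℝ → ℝ^q be continuous, and let x : ℝ → ℝⁿ be differentiable on [0, T] with x(t) ∈ X and x'(t) = f(x(t)) + g(x(t))·u_V(x(t)) + k(x(t))·w(t) for all t ∈ [0, T], and suppose V(x(0)) = 0. Then ∫₀ᵀ (‖h(x(t))‖² + ⟨u_V(x(t)), R·u_V(x(t))⟩) dt ≤ γ² · ∫₀ᵀ ‖w(t)‖² dt. -/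

import Mathlib

/-! Along a closed-loop trajectory,
`d/dt V(x t) + ‖h‖² + ⟨u_V, R u_V⟩ - γ² ‖w‖² = Ham(x, u_V, w)`. Completing the square in `w`,
the HJI equation says precisely that `Ham(x, u_V, w) = -γ² ‖w - w_V(x)‖² ≤ 0`. Integrating this
dissipation inequality over `[0, T]` and using `V(x 0) = 0 ≤ V(x T)` gives the bound. -/

open Matrix

/-- Matrix–vector multiplication, valued in Euclidean space. -/
noncomputable def mv {a b : ℕ} (M : Matrix (Fin a) (Fin b) ℝ)
    (v : EuclideanSpace ℝ (Fin b)) : EuclideanSpace ℝ (Fin a) :=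
  WithLp.toLp 2 (M.mulVec v)

/-- The control policy `u_V(x) = -(1/2) R⁻¹ g(x)ᵀ ∇V(x)`. -/
noncomputable def uPol {n m : ℕ}
    (g : EuclideanSpace ℝ (Fin n) → Matrix (Fin n) (Fin m) ℝ)
    (R : Matrix (Fin m) (Fin m) ℝ)
    (V : EuclideanSpace ℝ (Fin n) → ℝ)
    (x : EuclideanSpace ℝ (Fin n)) : EuclideanSpace ℝ (Fin m) :=
  (-(1/2 : ℝ)) • mv R⁻¹ (mv (g x)ᵀ (gradient V x))

/-- The disturbance policy `w_V(x) = (1/(2γ²)) k(x)ᵀ ∇V(x)`. -/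
noncomputable def wPol {n q : ℕ}
    (k : EuclideanSpace ℝ (Fin n) → Matrix (Fin n) (Fin q) ℝ)
    (γ : ℝ)
    (V : EuclideanSpace ℝ (Fin n) → ℝ)
    (x : EuclideanSpace ℝ (Fin n)) : EuclideanSpace ℝ (Fin q) :=
  (1/(2*γ^2)) • mv (k x)ᵀ (gradient V x)

/-- The Hamiltonian `H_V(x,u,w)`. -/
noncomputable def Ham {n m q p : ℕ}
    (f : EuclideanSpace ℝ (Fin n) → EuclideanSpace ℝ (Fin n))
    (g : EuclideanSpace ℝ (Fin n) → Matrix (Fin n) (Fin m) ℝ)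
    (k : EuclideanSpace ℝ (Fin n) → Matrix (Fin n) (Fin q) ℝ)
    (h : EuclideanSpace ℝ (Fin n) → EuclideanSpace ℝ (Fin p))
    (R : Matrix (Fin m) (Fin m) ℝ) (γ : ℝ)
    (V : EuclideanSpace ℝ (Fin n) → ℝ)
    (x : EuclideanSpace ℝ (Fin n))
    (u : EuclideanSpace ℝ (Fin m)) (w : EuclideanSpace ℝ (Fin q)) : ℝ :=
  (inner ℝ (gradient V x) (f x + mv (g x) u + mv (k x) w) : ℝ)
    + ‖h x‖^2 + (inner ℝ u (mv R u) : ℝ) - γ^2 * ‖w‖^2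

/-- `V` satisfies the HJI equation at `x`. -/
def HJIAt {n m q p : ℕ}
    (f : EuclideanSpace ℝ (Fin n) → EuclideanSpace ℝ (Fin n))
    (g : EuclideanSpace ℝ (Fin n) → Matrix (Fin n) (Fin m) ℝ)
    (k : EuclideanSpace ℝ (Fin n) → Matrix (Fin n) (Fin q) ℝ)
    (h : EuclideanSpace ℝ (Fin n) → EuclideanSpace ℝ (Fin p))
    (R : Matrix (Fin m) (Fin m) ℝ) (γ : ℝ)
    (V : EuclideanSpace ℝ (Fin n) → ℝ)
    (x : EuclideanSpace ℝ (Fin n)) : Prop :=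
  (inner ℝ (gradient V x) (f x) : ℝ) + ‖h x‖^2
    - (1/4) * (inner ℝ (mv (g x)ᵀ (gradient V x)) (mv R⁻¹ (mv (g x)ᵀ (gradient V x))) : ℝ)
    + (1/(4*γ^2)) * ‖mv (k x)ᵀ (gradient V x)‖^2 = 0

open MeasureTheory

lemma real_inner_mv {a b : ℕ} (M : Matrix (Fin a) (Fin b) ℝ) (v : EuclideanSpace ℝ (Fin a))
    (u : EuclideanSpace ℝ (Fin b)) :
    inner ℝ v (mv M u) = inner ℝ (mv Mᵀ v) u := by
  simp only [mv, EuclideanSpace.inner_eq_star_dotProduct, star_trivial,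
    dotProduct_comm _ v.ofLp]
  rw [dotProduct_mulVec, ← vecMul_transpose, transpose_transpose, dotProduct_comm]

lemma mv_smul {a b : ℕ} (M : Matrix (Fin a) (Fin b) ℝ) (c : ℝ) (v : EuclideanSpace ℝ (Fin b)) :
    mv M (c • v) = c • mv M v := by
  simp [mv, mulVec_smul]

lemma mv_mv {a b c : ℕ} (M : Matrix (Fin a) (Fin b) ℝ) (N : Matrix (Fin b) (Fin c) ℝ)
    (v : EuclideanSpace ℝ (Fin c)) : mv M (mv N v) = mv (M * N) v := by
  simp [mv, mulVec_mulVec]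

lemma mv_one {a : ℕ} (v : EuclideanSpace ℝ (Fin a)) : mv 1 v = v := by
  simp [mv]

lemma Continuous.mv {a b : ℕ} {α : Type*} [TopologicalSpace α]
    {M : α → Matrix (Fin a) (Fin b) ℝ} {v : α → EuclideanSpace ℝ (Fin b)}
    (hM : Continuous M) (hv : Continuous v) : Continuous fun s => mv (M s) (v s) :=
  (PiLp.continuous_toLp 2 _).comp (hM.matrix_mulVec ((PiLp.continuous_ofLp 2 _).comp hv))

section Gradient

variable {E : Type*} [NormedAddCommGroup E] [InnerProductSpace ℝ E] [CompleteSpace E]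

lemma ContDiff.continuous_gradient {V : E → ℝ} (hV : ContDiff ℝ 1 V) :
    Continuous (gradient V) :=
  (InnerProductSpace.toDual ℝ E).symm.continuous.comp (hV.continuous_fderiv one_ne_zero)

lemma HasGradientAt.comp_hasDerivAt {V : E → ℝ} {x : ℝ → E} {G v : E} {t : ℝ}
    (hV : HasGradientAt V G (x t)) (hx : HasDerivAt x v t) :
    HasDerivAt (fun s => V (x s)) (inner ℝ G v) t := by
  have hcomp := hV.hasFDerivAt.comp_hasDerivAt t hx
  rwa [InnerProductSpace.toDual_apply_apply] at hcomp

end Gradient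

open Set intervalIntegral in
theorem integral_add_sub_le_integral_of_hasDerivAt {S S' c s : ℝ → ℝ} {a b : ℝ} (hab : a ≤ b)
    (hS : ∀ t ∈ Icc a b, HasDerivAt S (S' t) t)
    (hc : IntegrableOn c (Icc a b)) (hs : IntegrableOn s (Icc a b))
    (hle : ∀ t ∈ Ioo a b, c t + S' t ≤ s t) :
    (∫ t in a..b, c t) + (S b - S a) ≤ ∫ t in a..b, s t := by
  have hint : ∀ {φ : ℝ → ℝ}, IntegrableOn φ (Icc a b) → IntervalIntegrable φ volume a b :=
    (intervalIntegrable_iff_integrableOn_Icc_of_le hab).2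
  have hsub := sub_le_integral_of_hasDeriv_right_of_le (φ := fun t => s t - c t) hab
    (fun t ht => (hS t ht).continuousAt.continuousWithinAt)
    (fun t ht => (hS t (Ioo_subset_Icc_self ht)).hasDerivWithinAt) (hs.sub hc)
    (fun t ht => le_sub_iff_add_le'.2 (hle t ht))
  rw [integral_sub (hint hs) (hint hc)] at hsub
  linarith

section HJI

variable {n m q p : ℕ}
    {f : EuclideanSpace ℝ (Fin n) → EuclideanSpace ℝ (Fin n)}
    {g : EuclideanSpace ℝ (Fin n) → Matrix (Fin n) (Fin m) ℝ}
    {k : EuclideanSpace ℝ (Fin n) → Matrix (Fin n) (Fin q) ℝ}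
    {h : EuclideanSpace ℝ (Fin n) → EuclideanSpace ℝ (Fin p)}
    {R : Matrix (Fin m) (Fin m) ℝ} {γ : ℝ}
    {V : EuclideanSpace ℝ (Fin n) → ℝ} {y : EuclideanSpace ℝ (Fin n)}

theorem HJIAt.ham_uPol_eq (hy : HJIAt f g k h R γ V y) (hR : IsUnit R.det) (hγ : γ ≠ 0)
    (ω : EuclideanSpace ℝ (Fin q)) :
    Ham f g k h R γ V y (uPol g R V y) ω = -(γ ^ 2 * ‖ω - wPol k γ V y‖ ^ 2) := by
  set a := mv (g y)ᵀ (gradient V y)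
  set b := mv (k y)ᵀ (gradient V y)
  have hgu : inner ℝ (gradient V y) (mv (g y) (uPol g R V y))
      = -(1 / 2) * inner ℝ a (mv R⁻¹ a) := by
    rw [real_inner_mv, uPol, real_inner_smul_right]
  have hku : inner ℝ (gradient V y) (mv (k y) ω) = inner ℝ b ω := real_inner_mv _ _ _
  have hRu : inner ℝ (uPol g R V y) (mv R (uPol g R V y)) = 1 / 4 * inner ℝ a (mv R⁻¹ a) := by
    rw [uPol, mv_smul, real_inner_smul_left, real_inner_smul_right, mv_mv R R⁻¹,
      mul_nonsing_inv R hR, mv_one, real_inner_comm]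
    ring
  have hwV : γ ^ 2 * ‖ω - wPol k γ V y‖ ^ 2
      = γ ^ 2 * ‖ω‖ ^ 2 - inner ℝ b ω + 1 / (4 * γ ^ 2) * ‖b‖ ^ 2 := by
    rw [wPol, norm_sub_sq_real, norm_smul, real_inner_smul_right, mul_pow, Real.norm_eq_abs,
      sq_abs, real_inner_comm]
    field_simp
    ring
  rw [HJIAt] at hy
  rw [Ham, inner_add_right, inner_add_right, hgu, hku, hRu, hwV]
  linarith

theorem HJIAt.ham_uPol_nonpos (hy : HJIAt f g k h R γ V y) (hR : IsUnit R.det) (hγ : γ ≠ 0)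
    (ω : EuclideanSpace ℝ (Fin q)) : Ham f g k h R γ V y (uPol g R V y) ω ≤ 0 := by
  rw [hy.ham_uPol_eq hR hγ]
  exact neg_nonpos.2 (by positivity)

lemma continuous_uPol (hg : Continuous g) (hV : ContDiff ℝ 1 V) :
    Continuous (uPol g R V) := by
  unfold uPol
  exact (continuous_const.mv (hg.matrix_transpose.mv hV.continuous_gradient)).const_smul
    (-(1 / 2) : ℝ)

end HJI

theorem finite_horizon_l2_gain_general {n m q p : ℕ}
    (f : EuclideanSpace ℝ (Fin n) → EuclideanSpace ℝ (Fin n))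
    (g : EuclideanSpace ℝ (Fin n) → Matrix (Fin n) (Fin m) ℝ)
    (k : EuclideanSpace ℝ (Fin n) → Matrix (Fin n) (Fin q) ℝ)
    (h : EuclideanSpace ℝ (Fin n) → EuclideanSpace ℝ (Fin p))
    (R : Matrix (Fin m) (Fin m) ℝ) (hR : R.PosDef)
    (γ : ℝ) (hγ : 0 < γ)
    (X : Set (EuclideanSpace ℝ (Fin n)))
    (V : EuclideanSpace ℝ (Fin n) → ℝ)
    (hV : ContDiff ℝ 1 V)
    (hVnonneg : ∀ y ∈ X, 0 ≤ V y)
    (hHJI : ∀ y ∈ X, HJIAt f g k h R γ V y)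
    (hg : Continuous g) (hh : Continuous h)
    (T : ℝ) (hT : 0 < T)
    (w : ℝ → EuclideanSpace ℝ (Fin q)) (hw : Continuous w)
    (x : ℝ → EuclideanSpace ℝ (Fin n))
    (hxX : ∀ t ∈ Set.Icc (0:ℝ) T, x t ∈ X)
    (hx : ∀ t ∈ Set.Icc (0:ℝ) T, HasDerivAt x
      (f (x t) + mv (g (x t)) (uPol g R V (x t)) + mv (k (x t)) (w t)) t)
    (hx0 : V (x 0) = 0) :
    ∫ t in (0:ℝ)..T,
        (‖h (x t)‖^2 + (inner ℝ (uPol g R V (x t)) (mv R (uPol g R V (x t))) : ℝ))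
      ≤ γ^2 * ∫ t in (0:ℝ)..T, ‖w t‖^2 := by
  have hxc : ContinuousOn x (Set.Icc 0 T) :=
    fun t ht => (hx t ht).continuousAt.continuousWithinAt
  have hu : Continuous (uPol g R V) := continuous_uPol hg hV
  have hcost : ContinuousOn (fun t => ‖h (x t)‖ ^ 2
      + (inner ℝ (uPol g R V (x t)) (mv R (uPol g R V (x t))) : ℝ)) (Set.Icc 0 T) :=
    ((hh.norm.pow 2).add (hu.inner (continuous_const.mv hu))).comp_continuousOn hxc
  have hVx : ∀ t ∈ Set.Icc 0 T, HasDerivAt (fun s => V (x s)) (inner ℝ (gradient V (x t))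
      (f (x t) + mv (g (x t)) (uPol g R V (x t)) + mv (k (x t)) (w t))) t :=
    fun t ht => ((hV.differentiable one_ne_zero _).hasGradientAt).comp_hasDerivAt (hx t ht)
  have hdiss := integral_add_sub_le_integral_of_hasDerivAt (s := fun t => γ ^ 2 * ‖w t‖ ^ 2)
    hT.le hVx hcost.integrableOn_Icc ((hw.norm.pow 2).const_mul (γ ^ 2)).integrableOn_Icc
    fun t ht => by
      have hHam := (hHJI _ (hxX t (Set.Ioo_subset_Icc_self ht))).ham_uPol_nonpos
        hR.det_pos.ne'.isUnit hγ.ne' (w t)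
      rw [Ham] at hHam
      linarith
  rw [intervalIntegral.integral_const_mul, hx0] at hdiss
  linarith [hVnonneg _ (hxX T ⟨hT.le, le_rfl⟩)]

/-- **Finite-horizon L₂-gain bound (part of Lemma 1).**  If `V` is continuously
differentiable, nonnegative on `X`, and satisfies the HJI equation on `X`, the data are
continuous, and `x` solves the closed-loop dynamics on `[0,T]` inside `X` with `V(x 0) = 0`,
then `∫₀ᵀ (‖h(x t)‖² + ⟨u_V(x t), R u_V(x t)⟩) dt ≤ γ² ∫₀ᵀ ‖w t‖² dt`. -/
theorem finite_horizon_l2_gain {n m q p : ℕ}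
    (f : EuclideanSpace ℝ (Fin n) → EuclideanSpace ℝ (Fin n))
    (g : EuclideanSpace ℝ (Fin n) → Matrix (Fin n) (Fin m) ℝ)
    (k : EuclideanSpace ℝ (Fin n) → Matrix (Fin n) (Fin q) ℝ)
    (h : EuclideanSpace ℝ (Fin n) → EuclideanSpace ℝ (Fin p))
    (R : Matrix (Fin m) (Fin m) ℝ) (hR : R.PosDef)
    (γ : ℝ) (hγ : 0 < γ)
    (X : Set (EuclideanSpace ℝ (Fin n)))
    (V : EuclideanSpace ℝ (Fin n) → ℝ)
    (hV : ContDiff ℝ 1 V)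
    (hVnonneg : ∀ y ∈ X, 0 ≤ V y)
    (hHJI : ∀ y ∈ X, HJIAt f g k h R γ V y)
    (hf : Continuous f) (hg : Continuous g) (hk : Continuous k) (hh : Continuous h)
    (T : ℝ) (hT : 0 < T)
    (w : ℝ → EuclideanSpace ℝ (Fin q)) (hw : Continuous w)
    (x : ℝ → EuclideanSpace ℝ (Fin n))
    (hxX : ∀ t ∈ Set.Icc (0:ℝ) T, x t ∈ X)
    (hx : ∀ t ∈ Set.Icc (0:ℝ) T, HasDerivAt x
      (f (x t) + mv (g (x t)) (uPol g R V (x t)) + mv (k (x t)) (w t)) t)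
    (hx0 : V (x 0) = 0) :
    ∫ t in (0:ℝ)..T,
        (‖h (x t)‖^2 + (inner ℝ (uPol g R V (x t)) (mv R (uPol g R V (x t))) : ℝ))
      ≤ γ^2 * ∫ t in (0:ℝ)..T, ‖w t‖^2 :=
  finite_horizon_l2_gain_general f g k h R hR γ hγ X V hV hVnonneg hHJI hg hh T hT w hw x hxX hx hx0
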